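/- arXiv:1501.05559 — 3 statements merged into one kernel-verified Lean document; each statement's English description precedes it below -/
import Mathlib

section
/- Let n ≥ 2, let S denote the unit sphere of the Euclidean space ℝⁿ, and let σ denote the canonical (rotation-invariant, finite, fully supported) surface measure on S. If f : S → ℝ is continuous with f(x) > 0 for every x ∈ S, then ∫_S f dσ > 0 and ‖∫_S x·f(x) dσ(x)‖ < ∫_S f dσ; equivalently, (∫_S f dσ)² > Σ_{i=1}^{n} (∫_S xⁱ f(x) dσ(x))². In other words, the vector P := (∫_S f dσ, ∫_S x¹ f dσ, …, ∫_S xⁿ f dσ) ∈ ℝ^{1+n} is future timelike for the Minkowski quadratic form. -/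
open MeasureTheory Metric

/-!
Write `v = ∫ f • x dσ` and let `u = ‖v‖⁻¹ • v` (so `u = 0` if `v = 0`). Then
`‖v‖ = ⟪u, v⟫ = ∫ f dσ - ∫ f (1 - ⟪u, x⟫) dσ`, and the last integrand is nonnegative
because `‖u‖, ‖x‖ ≤ 1`. It vanishes only where `x = u`; since `σ` has no atoms when `n ≥ 2`,
this happens on a null set, so the last integral is positive and `‖v‖ < ∫ f dσ`.
-/

open InnerProductSpace Module

lemma eq_of_norm_le_one_of_real_inner_eq_one {E : Type*} [NormedAddCommGroup E]
    [InnerProductSpace ℝ E] {u w : E} (hu : ‖u‖ ≤ 1) (hw : ‖w‖ ≤ 1) (h : ⟪u, w⟫_ℝ = 1) :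
    u = w := by
  have hsq : ‖u - w‖ ^ 2 ≤ 0 := by
    rw [norm_sub_sq_real, h]
    nlinarith [norm_nonneg u, norm_nonneg w]
  exact sub_eq_zero.mp (norm_eq_zero.mp (by nlinarith [norm_nonneg (u - w)]))

theorem norm_integral_smul_lt_integral {α E : Type*} [MeasurableSpace α]
    [NormedAddCommGroup E] [InnerProductSpace ℝ E] [CompleteSpace E]
    {μ : Measure α} {f : α → ℝ} {g : α → E}
    (hf : Integrable f μ) (hfg : Integrable (fun x ↦ f x • g x) μ)
    (hf_pos : ∀ᵐ x ∂μ, 0 < f x) (hg_le : ∀ᵐ x ∂μ, ‖g x‖ ≤ 1)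
    (hg_const : ∀ c, ¬ g =ᵐ[μ] fun _ ↦ c) :
    ‖∫ x, f x • g x ∂μ‖ < ∫ x, f x ∂μ := by
  set v := ∫ x, f x • g x ∂μ
  set u := ‖v‖⁻¹ • v
  have hu : ‖u‖ ≤ 1 := by
    rw [norm_smul, norm_inv, norm_norm]
    exact inv_mul_le_one_of_le₀ le_rfl (norm_nonneg v)
  have huv : ⟪u, v⟫_ℝ = ‖v‖ := by
    rw [real_inner_smul_left, real_inner_self_eq_norm_sq]
    rcases (norm_nonneg v).eq_or_lt with h | h
    · simp [← h]
    · field_simp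
  set gap := fun x ↦ f x - ⟪u, f x • g x⟫_ℝ
  have hgap_nonneg : 0 ≤ᵐ[μ] gap := by
    filter_upwards [hf_pos, hg_le] with x hfx hgx
    have : ⟪u, g x⟫_ℝ ≤ 1 :=
      (real_inner_le_norm u (g x)).trans (mul_le_one₀ hu (norm_nonneg _) hgx)
    simp only [gap, Pi.zero_apply, real_inner_smul_right, sub_nonneg]
    exact mul_le_of_le_one_right hfx.le this
  have hgap_int : Integrable gap μ := hf.sub (hfg.const_inner u)
  have hgap_pos : 0 < ∫ x, gap x ∂μ := by
    refine (integral_nonneg_of_ae hgap_nonneg).lt_of_ne fun h ↦ hg_const u ?_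
    filter_upwards [(integral_eq_zero_iff_of_nonneg_ae hgap_nonneg hgap_int).mp h.symm,
      hf_pos, hg_le] with x hx hfx hgx
    refine (eq_of_norm_le_one_of_real_inner_eq_one hu hgx ?_).symm
    simp only [gap, Pi.zero_apply, real_inner_smul_right, sub_eq_zero] at hx
    exact (mul_eq_left₀ hfx.ne').mp hx.symm
  calc ‖v‖ = ∫ x, ⟪u, f x • g x⟫_ℝ ∂μ := by rw [integral_inner hfg, huv]
    _ = (∫ x, f x ∂μ) - ∫ x, gap x ∂μ := by
      rw [integral_sub hf (hfg.const_inner u), sub_sub_cancel]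
    _ < ∫ x, f x ∂μ := sub_lt_self _ hgap_pos

theorem not_ae_eq_const_of_injective {α β : Type*} [MeasurableSpace α] {μ : Measure α}
    [NullSingletonClass μ] (hμ : μ ≠ 0) {g : α → β} (hg : Function.Injective g) (c : β) :
    ¬ g =ᵐ[μ] fun _ ↦ c := by
  intro h
  have hnull : ∀ᵐ x ∂μ, g x ≠ c :=
    measure_mono_null (fun x hx ↦ not_not.mp hx)
      (Set.Subsingleton.measure_zero (fun x hx y hy ↦ hg (hx.trans hy.symm)) μ)
  exact hμ (ae_eq_bot.mp (Filter.eventually_false_iff_eq_bot.mp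
    (by filter_upwards [h, hnull] with x hx hx' using hx' hx)))

theorem Measure.toSphere_nullSingletonClass {E : Type*} [NormedAddCommGroup E] [NormedSpace ℝ E]
    [MeasurableSpace E] [BorelSpace E] [FiniteDimensional ℝ E] (μ : Measure E)
    [μ.IsAddHaarMeasure] (hE : 1 < finrank ℝ E) : NullSingletonClass μ.toSphere where
  measure_singleton x := by
    rw [μ.toSphere_apply' (measurableSet_singleton x), Set.image_singleton]
    have hspan : (ℝ ∙ (x : E)) ≠ ⊤ := fun h ↦ by
      have := finrank_span_singleton (K := ℝ) (ne_zero_of_mem_unit_sphere x)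
      rw [h, finrank_top] at this
      omega
    refine mul_eq_zero_of_right _ (measure_mono_null ?_ (μ.addHaar_submodule _ hspan))
    rintro _ ⟨c, -, y, rfl, rfl⟩
    exact Submodule.smul_mem _ c (Submodule.mem_span_singleton_self _)

theorem EuclideanSpace.integral_apply {α ι : Type*} [MeasurableSpace α] [Fintype ι]
    {μ : Measure α} {g : α → EuclideanSpace ℝ ι} (hg : Integrable g μ) (i : ι) :
    (∫ x, g x ∂μ) i = ∫ x, g x i ∂μ :=
  ((EuclideanSpace.proj i).integral_comp_comm hg).symm

/-- For `n ≥ 2`, the unit sphere `S` of Euclidean `ℝⁿ` with its canonical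
surface measure `σ`, and a continuous strictly positive `f : S → ℝ`, we have
`∫ f dσ > 0`, `‖∫ x • f x dσ‖ < ∫ f dσ`, and equivalently
`(∫ f dσ)² > Σᵢ (∫ xⁱ f dσ)²`; i.e. the vector `P = (∫ f, ∫ x¹ f, …, ∫ xⁿ f)`
is future timelike for the Minkowski quadratic form. -/
theorem stmt0 (n : ℕ) (hn : 2 ≤ n)
    (σ : Measure (sphere (0 : EuclideanSpace ℝ (Fin n)) 1))
    (hσ : σ = (volume : Measure (EuclideanSpace ℝ (Fin n))).toSphere)
    (f : sphere (0 : EuclideanSpace ℝ (Fin n)) 1 → ℝ)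
    (hf : Continuous f)
    (hpos : ∀ x, 0 < f x) :
    0 < ∫ x, f x ∂σ ∧
    ‖∫ x, f x • (x : EuclideanSpace ℝ (Fin n)) ∂σ‖ < ∫ x, f x ∂σ ∧
    (∑ i : Fin n, (∫ x, (x : EuclideanSpace ℝ (Fin n)) i * f x ∂σ) ^ 2)
      < (∫ x, f x ∂σ) ^ 2 := by
  have hdim : 1 < finrank ℝ (EuclideanSpace ℝ (Fin n)) := by
    rw [finrank_euclideanSpace_fin]; omega
  have hσ_ne : σ ≠ 0 := by
    rw [hσ, Ne, Measure.toSphere_eq_zero_iff_finrank]; omega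
  have : IsFiniteMeasure σ := hσ ▸ inferInstance
  have : NullSingletonClass σ := hσ ▸ Measure.toSphere_nullSingletonClass volume hdim
  have hfx : Continuous fun x ↦ f x • (x : EuclideanSpace ℝ (Fin n)) :=
    hf.smul continuous_subtype_val
  have hfx_int : Integrable _ σ := hfx.integrable_of_hasCompactSupport (.of_compactSpace _)
  have hlt := norm_integral_smul_lt_integral
    (hf.integrable_of_hasCompactSupport (.of_compactSpace _)) hfx_int
    (.of_forall hpos) (.of_forall fun x ↦ (norm_eq_of_mem_sphere x).le)
    (not_ae_eq_const_of_injective hσ_ne Subtype.val_injective)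
  refine ⟨(norm_nonneg _).trans_lt hlt, hlt, ?_⟩
  calc ∑ i, (∫ x, (x : EuclideanSpace ℝ (Fin n)) i * f x ∂σ) ^ 2
      = ‖∫ x, f x • (x : EuclideanSpace ℝ (Fin n)) ∂σ‖ ^ 2 := by
        simp_rw [EuclideanSpace.real_norm_sq_eq, EuclideanSpace.integral_apply hfx_int,
          PiLp.smul_apply, smul_eq_mul, mul_comm]
    _ < _ := pow_lt_pow_left₀ hlt (norm_nonneg _) two_ne_zero
end

section
/- Let μ be a finite measure on a measurable space α with μ(α) > 0, let E be the Euclidean space ℝⁿ, and let v : α → E be μ-integrable such that a ↦ √(1 + ‖v(a)‖²) is also μ-integrable. Define C₀ := ∫_α √(1 + ‖v(a)‖²) dμ(a) and C := ∫_α v(a) dμ(a). Then C₀² − ‖C‖² ≥ μ(α)² > 0; in particular ‖C‖ < C₀, i.e. the vector (C₀, C) ∈ ℝ × E is future timelike. -/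
open MeasureTheory

/-!
`√(1 + ‖v a‖²)` is the norm of `(1, v a)` in `ℝ × E` with the `L²` product norm, so the triangle
inequality for Bochner integrals in that space gives
`√(μ(α)² + ‖∫ v‖²) = ‖∫ (1, v)‖ ≤ ∫ ‖(1, v)‖ = ∫ √(1 + ‖v‖²)`.
-/

section ProdL2

variable {α F E : Type*} [MeasurableSpace α] {μ : Measure α}
  [NormedAddCommGroup F] [NormedSpace ℝ F] [CompleteSpace F]
  [NormedAddCommGroup E] [NormedSpace ℝ E] [CompleteSpace E]
  {f : α → F} {v : α → E}

theorem integral_toLp_prod (hf : Integrable f μ) (hv : Integrable v μ) :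
    ∫ a, WithLp.toLp 2 (f a, v a) ∂μ = WithLp.toLp 2 (∫ a, f a ∂μ, ∫ a, v a ∂μ) := by
  rw [← integral_pair hf hv]
  exact (WithLp.prodContinuousLinearEquiv 2 ℝ F E).symm.integral_comp_comm _

theorem sqrt_sq_norm_integral_add_sq_norm_integral_le (hf : Integrable f μ)
    (hv : Integrable v μ) :
    √(‖∫ a, f a ∂μ‖ ^ 2 + ‖∫ a, v a ∂μ‖ ^ 2) ≤ ∫ a, √(‖f a‖ ^ 2 + ‖v a‖ ^ 2) ∂μ :=
  calc √(‖∫ a, f a ∂μ‖ ^ 2 + ‖∫ a, v a ∂μ‖ ^ 2)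
      = ‖∫ a, WithLp.toLp 2 (f a, v a) ∂μ‖ := by
        rw [integral_toLp_prod hf hv, WithLp.prod_norm_eq_of_L2]; rfl
    _ ≤ ∫ a, ‖WithLp.toLp 2 (f a, v a)‖ ∂μ := norm_integral_le_integral_norm _
    _ = ∫ a, √(‖f a‖ ^ 2 + ‖v a‖ ^ 2) ∂μ := by
        simp only [WithLp.prod_norm_eq_of_L2, WithLp.toLp_fst, WithLp.toLp_snd]

end ProdL2

theorem stmt1_general {α : Type*} [MeasurableSpace α] (μ : Measure α) [IsFiniteMeasure μ]
    (hμ : 0 < μ Set.univ)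
    (n : ℕ) (v : α → EuclideanSpace ℝ (Fin n))
    (hv : Integrable v μ) :
    0 < (μ Set.univ).toReal ^ 2 ∧
    (μ Set.univ).toReal ^ 2 ≤
      (∫ a, Real.sqrt (1 + ‖v a‖ ^ 2) ∂μ) ^ 2 - ‖∫ a, v a ∂μ‖ ^ 2 ∧
    ‖∫ a, v a ∂μ‖ < ∫ a, Real.sqrt (1 + ‖v a‖ ^ 2) ∂μ := by
  have hmass : 0 < (μ Set.univ).toReal := ENNReal.toReal_pos hμ.ne' (measure_ne_top μ _)
  have hC₀ : 0 ≤ ∫ a, Real.sqrt (1 + ‖v a‖ ^ 2) ∂μ :=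
    integral_nonneg fun _ => Real.sqrt_nonneg _
  have hsq : (μ Set.univ).toReal ^ 2 + ‖∫ a, v a ∂μ‖ ^ 2 ≤
      (∫ a, Real.sqrt (1 + ‖v a‖ ^ 2) ∂μ) ^ 2 := by
    have key := sqrt_sq_norm_integral_add_sq_norm_integral_le (integrable_const (1 : ℝ)) hv
    simp only [integral_const, smul_eq_mul, mul_one, norm_one, one_pow, Real.norm_eq_abs,
      sq_abs, measureReal_def] at key
    exact (Real.sqrt_le_iff.mp key).2
  refine ⟨by positivity, by linarith, ?_⟩
  exact lt_of_pow_lt_pow_left₀ 2 hC₀ (by nlinarith)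

/-- For a finite measure `μ` with `μ(α) > 0` and a `μ`-integrable
`v : α → ℝⁿ` such that `a ↦ √(1 + ‖v a‖²)` is integrable, the vector
`(C₀, C) = (∫ √(1+‖v‖²) dμ, ∫ v dμ)` satisfies `C₀² − ‖C‖² ≥ μ(α)² > 0`;
in particular `‖C‖ < C₀`, i.e. `(C₀, C)` is future timelike. -/
theorem stmt1 {α : Type*} [MeasurableSpace α] (μ : Measure α) [IsFiniteMeasure μ]
    (hμ : 0 < μ Set.univ)
    (n : ℕ) (v : α → EuclideanSpace ℝ (Fin n))
    (hv : Integrable v μ)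
    (hv' : Integrable (fun a => Real.sqrt (1 + ‖v a‖ ^ 2)) μ) :
    0 < (μ Set.univ).toReal ^ 2 ∧
    (μ Set.univ).toReal ^ 2 ≤
      (∫ a, Real.sqrt (1 + ‖v a‖ ^ 2) ∂μ) ^ 2 - ‖∫ a, v a ∂μ‖ ^ 2 ∧
    ‖∫ a, v a ∂μ‖ < ∫ a, Real.sqrt (1 + ‖v a‖ ^ 2) ∂μ :=
  stmt1_general μ hμ n v hv
end

section
/- Let n ≥ 1, let y ∈ ℝⁿ with ‖y‖ < 1, and let i ∈ {1,…,n}. Define V₀(y) := (1+‖y‖²)/(1−‖y‖²) and Vᵢ(y) := 2yⁱ/(1−‖y‖²). Then the Euclidean gradients of these functions satisfy the identity ((1−‖y‖²)/2)² · ( Vᵢ(y)·∇V₀(y) − V₀(y)·∇Vᵢ(y) ) = yⁱ·y − ((1+‖y‖²)/2)·eᵢ, where eᵢ is the i-th standard basis vector of ℝⁿ. -/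
/-!
All the lapse functions share the denominator `1 - ‖y‖²`, and for quotients with a common
denominator `h` the gradient of `h` cancels from the Wronskian:
`(f/h) ∇(g/h) - (g/h) ∇(f/h) = h⁻² (f ∇g - g ∇f)`.
With `f = 2yⁱ`, `g = 1 + ‖y‖²`, `∇f = 2eᵢ`, `∇g = 2y`, the right-hand side is
`4 (1 - ‖y‖²)⁻² (yⁱ y - ((1 + ‖y‖²)/2) eᵢ)`.
-/

open InnerProductSpace

section Gradient

variable {F : Type*} [NormedAddCommGroup F] [InnerProductSpace ℝ F] [CompleteSpace F]
  {f g h : F → ℝ} {f' g' h' x : F}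

theorem HasGradientAt.div (hf : HasGradientAt f f' x) (hh : HasGradientAt h h' x)
    (hx : h x ≠ 0) :
    HasGradientAt (fun z => f z / h z) ((h x ^ 2)⁻¹ • (h x • f' - f x • h')) x := by
  rw [hasGradientAt_iff_hasFDerivAt] at *
  refine ((hf.mul ((hasDerivAt_inv hx).comp_hasFDerivAt x hh)).congr_fderiv ?_)
    |>.congr_of_eventuallyEq ?_
  · ext v
    simp only [add_apply, smul_apply, map_sub, map_smul,
      sub_apply, toDual_apply_apply, smul_eq_mul, Function.comp_apply]
    field_simp
    ring
  · filter_upwards with z using div_eq_mul_inv _ _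

theorem HasGradientAt.const_add (c : ℝ) (hf : HasGradientAt f f' x) :
    HasGradientAt (fun z => c + f z) f' x := by
  rw [hasGradientAt_iff_hasFDerivAt] at *
  exact hf.const_add c

theorem HasGradientAt.const_sub (c : ℝ) (hf : HasGradientAt f f' x) :
    HasGradientAt (fun z => c - f z) (-f') x := by
  rw [hasGradientAt_iff_hasFDerivAt] at *
  simpa using hf.const_sub c

theorem HasGradientAt.const_mul (c : ℝ) (hf : HasGradientAt f f' x) :
    HasGradientAt (fun z => c * f z) (c • f') x := by
  rw [hasGradientAt_iff_hasFDerivAt] at *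
  simpa using hf.const_mul c

theorem hasGradientAt_inner_left (v : F) : HasGradientAt (fun z => inner ℝ v z) v x := by
  rw [hasGradientAt_iff_hasFDerivAt]
  exact (innerSL ℝ v).hasFDerivAt

theorem hasGradientAt_norm_sq (x : F) : HasGradientAt (fun z => ‖z‖ ^ 2) ((2 : ℝ) • x) x := by
  rw [hasGradientAt_iff_hasFDerivAt]
  refine (hasStrictFDerivAt_norm_sq x).hasFDerivAt.congr_fderiv ?_
  ext v
  simp [toDual_apply_apply]

theorem smul_gradient_div_sub_smul_gradient_div (hf : HasGradientAt f f' x)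
    (hg : HasGradientAt g g' x) (hh : HasGradientAt h h' x) (hx : h x ≠ 0) :
    (f x / h x) • gradient (fun z => g z / h z) x - (g x / h x) • gradient (fun z => f z / h z) x
      = (h x ^ 2)⁻¹ • (f x • g' - g x • f') := by
  rw [(hg.div hh hx).gradient, (hf.div hh hx).gradient]
  match_scalars
  · field_simp
  · field_simp
    ring
  · field_simp

end Gradient

theorem EuclideanSpace.hasGradientAt_apply {ι : Type*} [Fintype ι] [DecidableEq ι] (i : ι)
    (x : EuclideanSpace ℝ ι) :
    HasGradientAt (fun z : EuclideanSpace ℝ ι => z i) (EuclideanSpace.single i 1) x := by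
  convert hasGradientAt_inner_left (x := x) (EuclideanSpace.single i (1 : ℝ)) using 2 with z
  simp [EuclideanSpace.inner_single_left]

theorem stmt4_general (n : ℕ) (y : EuclideanSpace ℝ (Fin n)) (hy : ‖y‖ < 1)
    (i : Fin n)
    (V₀ : EuclideanSpace ℝ (Fin n) → ℝ)
    (hV₀ : V₀ = fun z => (1 + ‖z‖ ^ 2) / (1 - ‖z‖ ^ 2))
    (Vi : EuclideanSpace ℝ (Fin n) → ℝ)
    (hVi : Vi = fun z => 2 * z i / (1 - ‖z‖ ^ 2)) :
    ((1 - ‖y‖ ^ 2) / 2) ^ 2 •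
        (Vi y • gradient V₀ y - V₀ y • gradient Vi y) =
      y i • y - ((1 + ‖y‖ ^ 2) / 2) • EuclideanSpace.single i (1 : ℝ) := by
  have hden : 1 - ‖y‖ ^ 2 ≠ 0 := by nlinarith [norm_nonneg y]
  subst hV₀ hVi
  rw [smul_gradient_div_sub_smul_gradient_div
    ((EuclideanSpace.hasGradientAt_apply i y).const_mul 2)
    ((hasGradientAt_norm_sq y).const_add 1) ((hasGradientAt_norm_sq y).const_sub 1) hden]
  match_scalars <;> field_simp

/-- In the Poincaré ball model, with lapse functions
`V₀(y) = (1+‖y‖²)/(1−‖y‖²)` and `Vᵢ(y) = 2yⁱ/(1−‖y‖²)`, one has, for `‖y‖ < 1`,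
`((1−‖y‖²)/2)² • (Vᵢ(y)∇V₀(y) − V₀(y)∇Vᵢ(y)) = yⁱ • y − ((1+‖y‖²)/2) • eᵢ`. -/
theorem stmt4 (n : ℕ) (hn : 1 ≤ n) (y : EuclideanSpace ℝ (Fin n)) (hy : ‖y‖ < 1)
    (i : Fin n)
    (V₀ : EuclideanSpace ℝ (Fin n) → ℝ)
    (hV₀ : V₀ = fun z => (1 + ‖z‖ ^ 2) / (1 - ‖z‖ ^ 2))
    (Vi : EuclideanSpace ℝ (Fin n) → ℝ)
    (hVi : Vi = fun z => 2 * z i / (1 - ‖z‖ ^ 2)) :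
    ((1 - ‖y‖ ^ 2) / 2) ^ 2 •
        (Vi y • gradient V₀ y - V₀ y • gradient Vi y) =
      y i • y - ((1 + ‖y‖ ^ 2) / 2) • EuclideanSpace.single i (1 : ℝ) :=
  stmt4_general n y hy i V₀ hV₀ Vi hVi
end
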